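/- Let G₁ = (V, E) be a finite directed graph with distinguished nodes s, t ∈ V, and let G₂ = (V ∪ {t'}, E ∪ {(t, t')}) be obtained by adding a new node t' and the edge (t, t'). Equip every edge of G₂ with influence probability p = 1/2, and set the boosted influence probability of the edge (t, t') to p'_{tt'} = 1. With seed set S = {s} and boost set B = {t'}, the boost of influence spread satisfies 2·Δ_{{s}}({t'}) = Pr[s is connected to t in the random subgraph of G₁ in which each edge is independently retained with probability 1/2]. (This is the correctness of the reduction establishing the #P-hardness of computing Δ_S(B).) -/

import Mathlib

open Finset
open scoped Classical

noncomputable section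

variable {V : Type*}

/-- The probability weight of the live-edge configuration `L ⊆ E`:
each edge `e ∈ E` is independently live with probability `p e`. -/
def edgeWeight [DecidableEq V] (E : Finset (V × V)) (p : V × V → ℝ)
    (L : Finset (V × V)) : ℝ :=
  (∏ e ∈ L, p e) * ∏ e ∈ E \ L, (1 - p e)

/-- `v` is activated in configuration `L`: it is reachable from some seed in `S`
through live (directed) edges. -/
def Reaches (L : Finset (V × V)) (S : Finset V) (v : V) : Prop :=
  ∃ s ∈ S, Relation.ReflTransGen (fun a b => (a, b) ∈ L) s v

/-- Activation probability of node `v` under the live-edge model with edge set `E`,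
edge probabilities `p`, and seed set `S`. -/
def ap [Fintype V] [DecidableEq V] (E : Finset (V × V)) (p : V × V → ℝ)
    (S : Finset V) (v : V) : ℝ :=
  ∑ L ∈ E.powerset, edgeWeight E p L * (if Reaches L S v then 1 else 0)

/-- Expected number of activated nodes lying in the node set `W`. -/
def spreadOn [Fintype V] [DecidableEq V] (E : Finset (V × V)) (p : V × V → ℝ)
    (S W : Finset V) : ℝ :=
  ∑ L ∈ E.powerset, edgeWeight E p L * ((W.filter (fun v => Reaches L S v)).card : ℝ)

/-- The influence spread `σ_S`: expected total number of activated nodes. -/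
def spread [Fintype V] [DecidableEq V] (E : Finset (V × V)) (p : V × V → ℝ)
    (S : Finset V) : ℝ :=
  spreadOn E p S Finset.univ

/-- Boosted edge probabilities: edges pointing into a boosted node use `p'`. -/
def pB (p p' : V × V → ℝ) (B : Finset V) : V × V → ℝ :=
  fun e => if e.2 ∈ B then p' e else p e

/-- The bidirected edge set of an undirected graph: each undirected edge is
replaced by the two directed edges. -/
def treeEdges [Fintype V] [DecidableEq V] (T : SimpleGraph V) [DecidableRel T.Adj] :
    Finset (V × V) :=
  Finset.univ.filter (fun e => T.Adj e.1 e.2)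

/-- `apSub E p S v u` is `ap_B(v\u)`: the activation probability of `v` in the
subtree `G_{v\u}` obtained by removing the directed edges `(u,v)` and `(v,u)`. -/
def apSub [Fintype V] [DecidableEq V] (E : Finset (V × V)) (p : V × V → ℝ)
    (S : Finset V) (v u : V) : ℝ :=
  ap (E \ {(u, v), (v, u)}) p S v

/-- The set of nodes of the connected component containing `v` w.r.t. edge set `E`. -/
def comp [Fintype V] [DecidableEq V] (E : Finset (V × V)) (v : V) : Finset V :=
  Finset.univ.filter (fun w => Relation.ReflTransGen (fun a b => (a, b) ∈ E) v w)

/-- `gain E p S v u` is `g_B(v\u)`: in the subtree `G_{v\u}`, the expected number of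
activated nodes when the seed set is `(S ∩ V(G_{v\u})) ∪ {v}` minus the expected
number when the seed set is `S ∩ V(G_{v\u})`. -/
def gain [Fintype V] [DecidableEq V] (E : Finset (V × V)) (p : V × V → ℝ)
    (S : Finset V) (v u : V) : ℝ :=
  spreadOn (E \ {(u, v), (v, u)}) p (insert v (S ∩ comp (E \ {(u, v), (v, u)}) v))
      (comp (E \ {(u, v), (v, u)}) v)
    - spreadOn (E \ {(u, v), (v, u)}) p (S ∩ comp (E \ {(u, v), (v, u)}) v)
      (comp (E \ {(u, v), (v, u)}) v)

/-- The edge set of `G₂ = (V ∪ {t'}, E ∪ {(t,t')})`, with `t'` represented by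
`none` and every original node `v` by `some v`. -/
def stEdges [DecidableEq V] (E : Finset (V × V)) (t : V) :
    Finset (Option V × Option V) :=
  (E.image fun e => ((some e.1 : Option V), (some e.2 : Option V))) ∪
    {((some t : Option V), (none : Option V))}

/-- Influence probabilities on `G₂`: every edge has probability `1/2`. -/
def stP : Option V × Option V → ℝ := fun _ => 1 / 2

/-- Boosted influence probabilities on `G₂`: the edge `(t, t')` (the only edge
into `t' = none`) has boosted probability `1`. -/
def stP' : Option V × Option V → ℝ :=
  fun e => if e.2 = none then 1 else 1 / 2

/-!
The boost set `{t'}` only changes the probability of the edge `(t, t')`, which hangs off `G₁`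
at the fresh node `t'`. Conditioning on that edge, it adds `t'` to the activated set exactly
when it is live and `t` is activated, so the spread of `G₂` equals the spread of `G₁` plus
`p_{tt'} · ap(t)`. The boost raises `p_{tt'}` from `1/2` to `1`, hence `2·Δ = ap(t)`, and with
all probabilities equal to `1/2` every live-edge configuration of `G₁` has weight `2^{-|E|}`.
-/

namespace InfluenceBoosting

variable {α β : Type*}

section EdgeWeight

variable [DecidableEq α] {E L : Finset (α × α)} {p q : α × α → ℝ} {e : α × α}

theorem edgeWeight_congr (h : ∀ e ∈ E, p e = q e) (hL : L ⊆ E) :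
    edgeWeight E p L = edgeWeight E q L := by
  unfold edgeWeight
  rw [prod_congr rfl fun e he => h e (hL he),
    prod_congr rfl fun e he => congrArg (1 - ·) (h e (mem_sdiff.mp he).1)]

theorem edgeWeight_half (hL : L ⊆ E) : edgeWeight E (fun _ => (1 / 2 : ℝ)) L = (1 / 2) ^ #E := by
  rw [edgeWeight, prod_const, prod_const, ← card_sdiff_add_card_eq_card hL, pow_add]
  norm_num [mul_comm]

theorem edgeWeight_insert_of_subset (he : e ∉ E) (hL : L ⊆ E) :
    edgeWeight (insert e E) p L = (1 - p e) * edgeWeight E p L := by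
  rw [edgeWeight, edgeWeight, insert_sdiff_of_notMem _ fun h => he (hL h),
    prod_insert fun h => he (mem_sdiff.mp h).1]
  ring

theorem edgeWeight_insert_insert (he : e ∉ E) (hL : L ⊆ E) :
    edgeWeight (insert e E) p (insert e L) = p e * edgeWeight E p L := by
  rw [edgeWeight, edgeWeight, insert_sdiff_insert, sdiff_insert_of_notMem he,
    prod_insert fun h => he (hL h)]
  ring

theorem edgeWeight_image [DecidableEq β] {g : α → β} (hg : Function.Injective g)
    (p : β × β → ℝ) :
    edgeWeight (E.image (Prod.map g g)) p (L.image (Prod.map g g)) =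
      edgeWeight E (p ∘ Prod.map g g) L := by
  have hG : Function.Injective (Prod.map g g) := hg.prodMap hg
  rw [edgeWeight, edgeWeight, ← image_sdiff _ _ hG,
    prod_image hG.injOn, prod_image hG.injOn]
  rfl

end EdgeWeight

section Reachability

variable {L : Finset (α × α)} {S : Finset α} {u v w : α}

theorem not_reaches_of_forall_snd_ne (hS : v ∉ S) (hin : ∀ e ∈ L, e.2 ≠ v) :
    ¬ Reaches L S v := by
  rintro ⟨a, ha, h⟩
  rcases Relation.ReflTransGen.cases_tail h with rfl | ⟨c, _, hc⟩
  exacts [hS ha, hin _ hc rfl]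

theorem reflTransGen_image_prodMap_iff [DecidableEq β] {g : α → β} (hg : Function.Injective g)
    {a b : α} :
    Relation.ReflTransGen (fun x y => (x, y) ∈ L.image (Prod.map g g)) (g a) (g b) ↔
      Relation.ReflTransGen (fun x y => (x, y) ∈ L) a b := by
  refine ⟨fun h => ?_, fun h => h.lift g fun x y hxy => mem_image_of_mem (Prod.map g g) hxy⟩
  suffices key : ∀ y, Relation.ReflTransGen (fun x y => (x, y) ∈ L.image (Prod.map g g)) (g a) y →
      ∃ b', g b' = y ∧ Relation.ReflTransGen (fun x y => (x, y) ∈ L) a b' by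
    obtain ⟨b', hb', h'⟩ := key _ h
    rwa [hg hb'] at h'
  intro y hy
  induction hy with
  | refl => exact ⟨a, rfl, .refl⟩
  | tail _ hcd ih =>
    obtain ⟨b', rfl, hb'⟩ := ih
    obtain ⟨⟨x, z⟩, hxz, hxz'⟩ := mem_image.mp hcd
    obtain ⟨hx, rfl⟩ := Prod.mk.inj hxz'
    exact ⟨z, rfl, hb'.tail (hg hx ▸ hxz)⟩

theorem reaches_image_iff [DecidableEq β] {g : α → β} (hg : Function.Injective g) :
    Reaches (L.image (Prod.map g g)) (S.image g) (g v) ↔ Reaches L S v := by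
  simp only [Reaches, exists_mem_image, reflTransGen_image_prodMap_iff hg]

variable [DecidableEq α]

theorem reflTransGen_insert_pendant {a : α} (hout : ∀ e ∈ L, e.1 ≠ v)
    (h : Relation.ReflTransGen (fun x y => (x, y) ∈ insert (u, v) L) a w) :
    Relation.ReflTransGen (fun x y => (x, y) ∈ L) a w ∨
      w = v ∧ Relation.ReflTransGen (fun x y => (x, y) ∈ L) a u := by
  induction h with
  | refl => exact .inl .refl
  | @tail c d _ hcd ih =>
    rcases mem_insert.mp hcd with hnew | hold
    · obtain ⟨rfl, rfl⟩ := Prod.mk.inj hnew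
      exact .inr ⟨rfl, ih.elim id And.right⟩
    · have hc : c ≠ v := hout _ hold
      exact .inl ((ih.resolve_right fun h => hc h.1).tail hold)

theorem reaches_insert_pendant_iff (hout : ∀ e ∈ L, e.1 ≠ v) :
    Reaches (insert (u, v) L) S w ↔ Reaches L S w ∨ w = v ∧ Reaches L S u := by
  have hmono := Relation.ReflTransGen.mono (r := fun x y => (x, y) ∈ L)
    (p := fun x y => (x, y) ∈ insert (u, v) L) fun _ _ => mem_insert_of_mem
  constructor
  · rintro ⟨a, ha, h⟩
    rcases reflTransGen_insert_pendant hout h with h | ⟨rfl, hu⟩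
    exacts [.inl ⟨a, ha, h⟩, .inr ⟨rfl, a, ha, hu⟩]
  · rintro (⟨a, ha, h⟩ | ⟨rfl, a, ha, h⟩)
    exacts [⟨a, ha, hmono _ _ h⟩, ⟨a, ha, (hmono _ _ h).tail (mem_insert_self _ _)⟩]

theorem card_reaches_insert_pendant [Fintype α] (hS : v ∉ S) (hout : ∀ e ∈ L, e.1 ≠ v)
    (hin : ∀ e ∈ L, e.2 ≠ v) :
    #{w | Reaches (insert (u, v) L) S w} =
      #{w | Reaches L S w} + if Reaches L S u then 1 else 0 := by
  have hv := not_reaches_of_forall_snd_ne hS hin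
  simp_rw [reaches_insert_pendant_iff hout, filter_or]
  rw [card_union_of_disjoint (disjoint_left.mpr fun w hw hq => ?_)]
  · split_ifs with hu <;> simp [hu, filter_eq']
  · rw [mem_filter] at hw hq
    exact hv (hq.2.1 ▸ hw.2)

end Reachability

section Spread

variable [Fintype α] [DecidableEq α] {E : Finset (α × α)} {p q : α × α → ℝ} {S : Finset α}

theorem spread_congr (h : ∀ e ∈ E, p e = q e) : spread E p S = spread E q S :=
  sum_congr rfl fun _ hL => by rw [edgeWeight_congr h (mem_powerset.mp hL)]

theorem ap_congr (h : ∀ e ∈ E, p e = q e) (v : α) : ap E p S v = ap E q S v :=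
  sum_congr rfl fun _ hL => by rw [edgeWeight_congr h (mem_powerset.mp hL)]

theorem ap_image [Fintype β] [DecidableEq β] {g : α → β} (hg : Function.Injective g)
    (p : β × β → ℝ) (S : Finset α) (v : α) :
    ap (E.image (Prod.map g g)) p (S.image g) (g v) = ap E (p ∘ Prod.map g g) S v := by
  rw [ap, ap, powerset_image, sum_image (image_injective (hg.prodMap hg)).injOn]
  exact sum_congr rfl fun L _ => by rw [edgeWeight_image hg, reaches_image_iff hg]

theorem ap_half_singleton (s v : α) :
    ap E (fun _ => 1 / 2) {s} v =
      ∑ L ∈ E.powerset, (1 / 2 : ℝ) ^ #E *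
        (if Relation.ReflTransGen (fun a b => (a, b) ∈ L) s v then 1 else 0) :=
  sum_congr rfl fun L hL => by
    rw [edgeWeight_half (mem_powerset.mp hL)]
    simp [Reaches]

theorem spread_insert_pendant {u v : α} (hS : v ∉ S) (hout : ∀ e ∈ E, e.1 ≠ v)
    (hin : ∀ e ∈ E, e.2 ≠ v) :
    spread (insert (u, v) E) p S = spread E p S + p (u, v) * ap E p S u := by
  have he : (u, v) ∉ E := fun h => hin _ h rfl
  rw [spread, spreadOn, sum_powerset_insert he, spread, spreadOn, ap, mul_sum, ← sum_add_distrib,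
    ← sum_add_distrib]
  refine sum_congr rfl fun L hL => ?_
  have hLE := mem_powerset.mp hL
  rw [edgeWeight_insert_of_subset he hLE, edgeWeight_insert_insert he hLE,
    card_reaches_insert_pendant hS (fun e h => hout e (hLE h)) (fun e h => hin e (hLE h))]
  push_cast
  ring

end Spread

end InfluenceBoosting

open InfluenceBoosting in
/-- Correctness of the reduction establishing the #P-hardness of computing
`Δ_S(B)`: in `G₂` with seed set `{s}` and boost set `{t'}`,
`2·Δ_{{s}}({t'})` equals the probability that `s` is connected to `t` in the
random subgraph of `G₁` in which each edge is independently retained with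
probability `1/2`. -/
theorem sharpP_reduction_correct [Fintype V] [DecidableEq V]
    (E : Finset (V × V)) (s t : V) :
    2 * (spread (stEdges E t) (pB stP stP' {(none : Option V)})
            ({(some s : Option V)} : Finset (Option V))
          - spread (stEdges E t) (pB stP stP' (∅ : Finset (Option V)))
            ({(some s : Option V)} : Finset (Option V))) =
      ∑ L ∈ E.powerset, (1 / 2 : ℝ) ^ E.card *
        (if Relation.ReflTransGen (fun a b => (a, b) ∈ L) s t then 1 else 0) := by
  set E₁ := E.image (Prod.map some some : V × V → Option V × Option V)
  have hE : stEdges E t = insert (some t, none) E₁ := by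
    rw [stEdges, union_comm, ← insert_eq]
    rfl
  have hout : ∀ e ∈ E₁, e.1 ≠ none := forall_mem_image.mpr fun _ _ => Option.some_ne_none _
  have hin : ∀ e ∈ E₁, e.2 ≠ none := forall_mem_image.mpr fun _ _ => Option.some_ne_none _
  have hhalf : ∀ e ∈ E₁, pB stP stP' {(none : Option V)} e = pB stP stP' ∅ e := fun e he => by
    simp [pB, stP, hin e he]
  have hseed : (none : Option V) ∉ ({some s} : Finset (Option V)) := by simp
  rw [hE, spread_insert_pendant hseed hout hin, spread_insert_pendant hseed hout hin,
    spread_congr hhalf, ap_congr hhalf, ← image_singleton, ap_image (Option.some_injective V)]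
  simp only [Function.comp_def, pB, stP', stP, mem_singleton, notMem_empty, if_true, if_false]
  rw [← ap_half_singleton]
  ring
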